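/- Let K be a field of characteristic zero, E a finite-dimensional K-vector space, w a weight function on E, and m a positive integer. Then there exists a weight function W on the m-th symmetric power Sym^m E such that W(x^m) = m·w(x) for every x ∈ E, where x^m denotes the m-th symmetric power of x. -/

import Mathlib

/-! A weight function on a finite-dimensional space is diagonalised by a basis: there are a
basis `e` and reals `ν i` with `w x = max {ν i | e.repr x i ≠ 0}`. Such a basis
is built by induction on the dimension: the vectors of weight below the maximal value `c`
form a subspace `V`, and every nonzero vector of a complement of `V` has weight `c`, so a basis
of `V` adapted to `w` extended by any basis of the complement is adapted to `w`.

On the tensor power take the product basis `e α = e (α 1) ⊗ ⋯ ⊗ e (α m)` with weights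
`ν (α 1) + ⋯ + ν (α m)`. The coordinates of `x ⊗ ⋯ ⊗ x` are the products of coordinates of `x`,
so its weight is `m • w x`; restricting to the symmetric tensors gives `W`. -/

/-- A weight function on a `K`-vector space `E` is a map `w : E → ℝ ∪ {−∞}` such that
(1) `w x = −∞` iff `x = 0`; (2) `w (t • x) = w x` for all nonzero `t : K`;
(3) `w (x + y) ≤ max (w x) (w y)`. -/
def IsWeightFunction (K : Type*) [Field K] {E : Type*} [AddCommGroup E] [Module K E]
    (w : E → WithBot ℝ) : Prop :=
  (∀ x : E, w x = ⊥ ↔ x = 0) ∧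
  (∀ (t : K) (x : E), t ≠ 0 → w (t • x) = w x) ∧
  (∀ x y : E, w (x + y) ≤ max (w x) (w y))

open scoped TensorProduct in
/-- In characteristic zero, the `m`-th symmetric power `Sym^m E` is the subspace of the
`m`-th tensor power `E^{⊗ m}` consisting of the tensors invariant under the action of
the symmetric group permuting the factors. -/
noncomputable def symmetricPower (K : Type*) [Field K] (E : Type*) [AddCommGroup E]
    [Module K E] (m : ℕ) : Submodule K (⨂[K] _ : Fin m, E) where
  carrier := {t | ∀ σ : Equiv.Perm (Fin m),
    PiTensorProduct.reindex K (fun _ : Fin m => E) σ t = t}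
  add_mem' := by
    intro a b ha hb σ
    rw [map_add, ha σ, hb σ]
  zero_mem' := by
    intro σ
    rw [map_zero]
  smul_mem' := by
    intro c a ha σ
    rw [map_smul, ha σ]

open Module

theorem Finset.sum_univ_sup {κ ι M : Type*} [Fintype κ] [DecidableEq κ] [AddCommMonoid M]
    [LinearOrder M] [IsOrderedAddMonoid M] (s : κ → Finset ι) (f : κ → ι → WithBot M) :
    ∑ j, (s j).sup (f j) = (Fintype.piFinset s).sup fun α => ∑ j, f j (α j) := by
  refine le_antisymm ?_ (Finset.sup_le fun α hα => Finset.sum_le_sum fun j _ =>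
    Finset.le_sup (Fintype.mem_piFinset.1 hα j))
  by_cases hs : ∀ j, (s j).Nonempty
  · choose α hαs hα using fun j => (s j).exists_mem_eq_sup (hs j) (f j)
    simp only [hα]
    exact Finset.le_sup (f := fun α => ∑ j, f j (α j)) (Fintype.mem_piFinset.2 hαs)
  · obtain ⟨j, hj⟩ := not_forall.1 hs
    rw [WithBot.sum_eq_bot_iff.2 ⟨j, Finset.mem_univ j, by simp [Finset.not_nonempty_iff_eq_empty.1 hj]⟩]
    exact bot_le

namespace IsWeightFunction

variable {K E F : Type*} [Field K] [AddCommGroup E] [Module K E] [AddCommGroup F] [Module K F]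
  {w : E → WithBot ℝ}

theorem map_zero (hw : IsWeightFunction K w) : w 0 = ⊥ := (hw.1 0).2 rfl

theorem comp_injective (hw : IsWeightFunction K w) (f : F →ₗ[K] E)
    (hf : Function.Injective f) : IsWeightFunction K (w ∘ f) :=
  ⟨fun x => by simp [hw.1, hf.eq_iff' f.map_zero], fun t x ht => by simp [hw.2.1 t _ ht],
    fun x y => by simpa using hw.2.2 (f x) (f y)⟩

def sublevel (hw : IsWeightFunction K w) (c : WithBot ℝ) : Submodule K E where
  carrier := {x | w x ≤ c}
  add_mem' hx hy := (hw.2.2 _ _).trans (max_le hx hy)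
  zero_mem' := by simp [hw.map_zero]
  smul_mem' t x hx := by
    rcases eq_or_ne t 0 with rfl | ht
    · simp [hw.map_zero]
    · simpa [hw.2.1 t x ht] using hx

def strictSublevel (hw : IsWeightFunction K w) (c : ℝ) : Submodule K E where
  carrier := {x | w x < c}
  add_mem' hx hy := (hw.2.2 _ _).trans_lt (max_lt hx hy)
  zero_mem' := by simp [hw.map_zero]
  smul_mem' t x hx := by
    rcases eq_or_ne t 0 with rfl | ht
    · simp [hw.map_zero]
    · simpa [hw.2.1 t x ht] using hx

theorem exists_forall_le [FiniteDimensional K E] [Nontrivial E] (hw : IsWeightFunction K w) :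
    ∃ c : ℝ, (∃ x, w x = c) ∧ ∀ y, w y ≤ c := by
  let b := Module.finBasis K E
  have : Nonempty (Fin (finrank K E)) := ⟨⟨0, finrank_pos⟩⟩
  obtain ⟨i, -, hi⟩ := Finset.univ.exists_mem_eq_sup Finset.univ_nonempty (w ∘ b)
  obtain ⟨c, hc⟩ := WithBot.ne_bot_iff_exists.1 fun h => b.ne_zero i ((hw.1 _).1 h)
  refine ⟨c, ⟨b i, hc.symm⟩, fun y => ?_⟩
  have hb : Set.range b ⊆ hw.sublevel c := by
    rintro _ ⟨j, rfl⟩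
    calc w (b j) ≤ Finset.univ.sup (w ∘ b) := Finset.le_sup (f := w ∘ b) (Finset.mem_univ j)
      _ = c := hi.trans hc.symm
  exact Submodule.span_le.2 hb (b.span_eq ▸ Submodule.mem_top)

theorem eq_of_isCompl_strictSublevel (hw : IsWeightFunction K w) {c : ℝ}
    (hc : ∀ y, w y ≤ c) {U : Submodule K E} (hU : IsCompl (hw.strictSublevel c) U)
    {v u : E} (hv : v ∈ hw.strictSublevel c) (hu : u ∈ U) (hu0 : u ≠ 0) : w (v + u) = c := by
  refine (hc _).antisymm (not_lt.1 fun h => hu0 ?_)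
  refine Submodule.disjoint_def.1 hU.disjoint u ?_ hu
  simpa using (hw.strictSublevel c).sub_mem (show v + u ∈ hw.strictSublevel c from h) hv

end IsWeightFunction

namespace Module.Basis

variable {ι ι' K E E' : Type*}

section Semiring

variable [Semiring K] [AddCommMonoid E] [Module K E] [AddCommMonoid E'] [Module K E']

noncomputable def weight (b : Basis ι K E) (ν : ι → ℝ) (x : E) : WithBot ℝ :=
  (b.repr x).support.sup fun i => (ν i : WithBot ℝ)

theorem weight_le_iff (b : Basis ι K E) (ν : ι → ℝ) (x : E) (c : WithBot ℝ) :
    b.weight ν x ≤ c ↔ ∀ i, b.repr x i ≠ 0 → ν i ≤ c := by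
  simp [weight]

theorem weight_map (b : Basis ι K E) (ν : ι → ℝ) (f : E ≃ₗ[K] E') (x : E) :
    (b.map f).weight ν (f x) = b.weight ν x := by
  simp [weight]

theorem weight_prod (b : Basis ι K E) (b' : Basis ι' K E') (ν : ι → ℝ) (ν' : ι' → ℝ)
    (x : E) (x' : E') :
    (b.prod b').weight (Sum.elim ν ν') (x, x') = max (b.weight ν x) (b'.weight ν' x') :=
  eq_of_forall_ge_iff fun c => by simp [weight_le_iff, Sum.forall]

theorem weight_const (b : Basis ι K E) (c : ℝ) {x : E} (hx : x ≠ 0) :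
    b.weight (fun _ => c) x = c :=
  Finset.sup_const (by simpa using hx) _

end Semiring

theorem isWeightFunction_weight [Field K] [AddCommGroup E] [Module K E] (b : Basis ι K E)
    (ν : ι → ℝ) : IsWeightFunction K (b.weight ν) := by
  classical
  refine ⟨fun x => ?_, fun t x ht => by simp [weight, Finsupp.support_smul_eq ht],
    fun x y => (Finset.sup_mono (by simpa using Finsupp.support_add)).trans_eq Finset.sup_union⟩
  simp only [weight, Finset.sup_eq_bot_iff, WithBot.coe_ne_bot, imp_false, not_not,
    Finsupp.mem_support_iff]
  exact ⟨fun h => b.repr.map_eq_zero_iff.1 (Finsupp.ext h), by rintro rfl; simp⟩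

theorem weight_tprod [CommSemiring K] [NoZeroDivisors K] [Nontrivial K] [AddCommMonoid E]
    [Module K E] {κ : Type*} [Fintype κ] (b : Basis ι K E) (ν : ι → ℝ) (f : κ → E) :
    (Basis.piTensorProduct fun _ : κ => b).weight (fun α => ∑ j, ν (α j))
      (PiTensorProduct.tprod K f) = ∑ j, b.weight ν (f j) := by
  classical
  have hsupp : ((Basis.piTensorProduct fun _ : κ => b).repr (PiTensorProduct.tprod K f)).support =
      Fintype.piFinset fun j => (b.repr (f j)).support := by
    ext α
    simp [Finset.prod_eq_zero_iff]
  simp only [weight, hsupp, WithBot.coe_sum, Finset.sum_univ_sup]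

end Module.Basis

theorem IsWeightFunction.exists_basis_eq_weight {K E : Type*} [Field K] [AddCommGroup E]
    [Module K E] [FiniteDimensional K E] {w : E → WithBot ℝ} (hw : IsWeightFunction K w) :
    ∃ (ι : Type) (b : Basis ι K E) (ν : ι → ℝ), w = b.weight ν := by
  induction hn : finrank K E using Nat.strong_induction_on generalizing E with
  | _ n ih =>
  subst hn
  cases subsingleton_or_nontrivial E
  · refine ⟨Empty, Basis.empty E, Empty.elim, funext fun x => ?_⟩
    simp [Subsingleton.elim x 0, hw.map_zero, Basis.weight]
  obtain ⟨c, ⟨x₀, hx₀⟩, hc⟩ := hw.exists_forall_le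
  set V := hw.strictSublevel c
  have hV : finrank K V < finrank K E := Submodule.finrank_lt fun h => by
    simpa [V, IsWeightFunction.strictSublevel, hx₀] using h.ge (Submodule.mem_top (x := x₀))
  obtain ⟨ι, b, ν, hb⟩ := ih _ hV (hw.comp_injective V.subtype V.injective_subtype) rfl
  obtain ⟨U, hU⟩ := V.exists_isCompl
  let φ := V.prodEquivOfIsCompl U hU
  refine ⟨ι ⊕ Fin (finrank K U), (b.prod (finBasis K U)).map φ, Sum.elim ν fun _ => c,
    funext fun x => ?_⟩
  obtain ⟨⟨v, u⟩, rfl⟩ := φ.surjective x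
  rw [Basis.weight_map, Basis.weight_prod, ← congrFun hb v]
  simp only [φ, Submodule.coe_prodEquivOfIsCompl', Function.comp_apply, Submodule.subtype_apply]
  rcases eq_or_ne u 0 with rfl | hu
  · simp [Basis.weight]
  · rw [Basis.weight_const _ _ hu, max_eq_right v.2.le,
      hw.eq_of_isCompl_strictSublevel hc hU v.2 u.2 (by simpa using hu)]

open scoped TensorProduct in
theorem symmetric_power_weight_function_general (K : Type*) [Field K] (E : Type*)
    [AddCommGroup E] [Module K E] [FiniteDimensional K E]
    (w : E → WithBot ℝ) (hw : IsWeightFunction K w) (m : ℕ) :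
    ∃ W : symmetricPower K E m → WithBot ℝ, IsWeightFunction K W ∧
      ∀ (x : E) (t : symmetricPower K E m),
        (t : ⨂[K] _ : Fin m, E) = PiTensorProduct.tprod K (fun _ : Fin m => x) →
        W t = m • w x := by
  obtain ⟨ι, b, ν, rfl⟩ := hw.exists_basis_eq_weight
  refine ⟨(Basis.piTensorProduct fun _ : Fin m => b).weight (fun α => ∑ j, ν (α j)) ∘
      (symmetricPower K E m).subtype,
    (Basis.isWeightFunction_weight _ _).comp_injective _ (Submodule.injective_subtype _),
    fun x t ht => ?_⟩
  simp [ht, Basis.weight_tprod]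

open scoped TensorProduct in
/-- Let `K` be a field of characteristic zero, `E` a finite-dimensional `K`-vector
space, `w` a weight function on `E` and `m` a positive integer. Then there is a weight
function `W` on `Sym^m E` with `W (x^m) = m • w x` for every `x : E`, where `x^m` is
the `m`-th symmetric power `x ⊗ ⋯ ⊗ x` of `x`. -/
theorem symmetric_power_weight_function (K : Type*) [Field K] [CharZero K] (E : Type*)
    [AddCommGroup E] [Module K E] [FiniteDimensional K E]
    (w : E → WithBot ℝ) (hw : IsWeightFunction K w) (m : ℕ) (hm : 0 < m) :
    ∃ W : symmetricPower K E m → WithBot ℝ, IsWeightFunction K W ∧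
      ∀ (x : E) (t : symmetricPower K E m),
        (t : ⨂[K] _ : Fin m, E) = PiTensorProduct.tprod K (fun _ : Fin m => x) →
        W t = m • w x :=
  symmetric_power_weight_function_general K E w hw m
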